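/- arXiv:1402.7248 — 4 statements merged into one kernel-verified Lean document; each statement's English description precedes it below -/
import Mathlib

section
/- Monotonicity of the FCFS c-server system in its inputs (Theorem 3.2, first part): Let c ≥ 1. Let 0 ≤ t_1 ≤ t_2 ≤ … and 0 ≤ t̃_1 ≤ t̃_2 ≤ … be two nondecreasing sequences of arrival times with t_m ≤ t̃_m for all m, and let (S_m) and (S̃_m) be two sequences of nonnegative service durations with S_m ≤ S̃_m for all m. Let (J_m, D_m) be the service-initiation and ordered departure times of the FCFS system with inputs (t_m),(S_m), and let (J̃_m, D̃_m) be those of the FCFS system with inputs (t̃_m),(S̃_m). Then J_m ≤ J̃_m and D_m ≤ D̃_m for every m ≥ 1. -/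
/-- m-th smallest element (m-th order statistic, 1-indexed) of a list of reals. -/
noncomputable def minStat (m : ℕ) (l : List ℝ) : ℝ :=
  ((Multiset.ofList l).sort (· ≤ ·)).getD (m - 1) 0

/-- FCFS service-initiation times: `fcfsJ c t S m = t m` for `m ≤ c`, and
`fcfsJ c t S (m + c) = max (t (m+c)) (fcfsD c t S m)` for `m ≥ 1`. -/
noncomputable def fcfsJ (c : ℕ) (t S : ℕ → ℝ) : ℕ → ℝ
  | n =>
    if n ≤ c then t n
    else
      max (t n) (minStat (n - c)
        (List.ofFn (fun i : Fin (n - 1) => fcfsJ c t S (i + 1) + S (i + 1))))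
  termination_by n => n
  decreasing_by
    have := i.isLt
    omega

/-- FCFS ordered departure times: `fcfsD c t S m` is the m-th smallest element of
the multiset `{J 1 + S 1, …, J (m+c-1) + S (m+c-1)}`. -/
noncomputable def fcfsD (c : ℕ) (t S : ℕ → ℝ) (m : ℕ) : ℝ :=
  minStat m (List.ofFn (fun i : Fin (m + c - 1) => fcfsJ c t S (i + 1) + S (i + 1)))


open List in
/-- The sorted version of `ofFn f` is `ofFn (f ∘ Tuple.sort f)`. -/
lemma sort_ofFn_aux {n : ℕ} (f : Fin n → ℝ) :
    (Multiset.ofList (List.ofFn f)).sort (· ≤ ·) = List.ofFn (f ∘ Tuple.sort f) := by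
  refine List.Perm.eq_of_pairwise'
    (Multiset.pairwise_sort _ _) (Tuple.monotone_sort f).sortedLE_ofFn.pairwise
    ((Multiset.coe_eq_coe.mp (Multiset.sort_eq _ _)).trans
      ((Tuple.sort f).ofFn_comp_perm f).symm)

lemma sorted_tuple_mono_aux {n : ℕ} (f g : Fin n → ℝ) (hfg : ∀ i, f i ≤ g i) (j : Fin n) :
    f (Tuple.sort f j) ≤ g (Tuple.sort g j) := by
  set a := g (Tuple.sort g j) with ha
  have hg : Monotone (g ∘ Tuple.sort g) := Tuple.monotone_sort g
  have hf : Monotone (f ∘ Tuple.sort f) := Tuple.monotone_sort f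
  have h1 : (j : ℕ) < Fintype.card {i // (g ∘ Tuple.sort g) i ≤ a} :=
    by rw [Fintype.card_subtype]; exact (Tuple.lt_card_le_iff_apply_le_of_monotone (a := a) (j := j) hg).2 le_rfl
  have e1 : Fintype.card {i // (g ∘ Tuple.sort g) i ≤ a} = Fintype.card {i // g i ≤ a} :=
    Fintype.card_congr ((Tuple.sort g).subtypeEquiv (fun i => Iff.rfl))
  have e2 : Fintype.card {i // (f ∘ Tuple.sort f) i ≤ a} = Fintype.card {i // f i ≤ a} :=
    Fintype.card_congr ((Tuple.sort f).subtypeEquiv (fun i => Iff.rfl))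
  have hle : Fintype.card {i // g i ≤ a} ≤ Fintype.card {i // f i ≤ a} :=
    Fintype.card_subtype_mono _ _ (fun i hi => le_trans (hfg i) hi)
  exact (Tuple.lt_card_le_iff_apply_le_of_monotone (a := a) (j := j) hf).1
    (by rw [← Fintype.card_subtype]; omega)

/-- Order statistics are monotone under pointwise domination. -/
lemma minStat_mono_aux {n : ℕ} (m : ℕ) (f g : Fin n → ℝ) (hfg : ∀ i, f i ≤ g i) :
    minStat m (List.ofFn f) ≤ minStat m (List.ofFn g) := by
  unfold minStat
  rw [sort_ofFn_aux, sort_ofFn_aux]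
  by_cases h : m - 1 < n
  · rw [List.getD_eq_getElem _ _ (by simpa using h), List.getD_eq_getElem _ _ (by simpa using h)]
    simpa using sorted_tuple_mono_aux f g hfg ⟨m - 1, h⟩
  · rw [List.getD_eq_default _ _ (by simpa using h), List.getD_eq_default _ _ (by simpa using h)]

/-- **Monotonicity of the FCFS c-server system in its inputs.**
If the arrival times and service durations of one FCFS system are dominated by those
of another, then so are all service-initiation times and ordered departure times. -/
theorem fcfs_monotone_in_inputs
    (c : ℕ) (hc : 1 ≤ c)
    (t t' S S' : ℕ → ℝ)
    (ht_nonneg : 0 ≤ t 1) (ht'_nonneg : 0 ≤ t' 1)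
    (ht_mono : ∀ m, 1 ≤ m → t m ≤ t (m + 1))
    (ht'_mono : ∀ m, 1 ≤ m → t' m ≤ t' (m + 1))
    (hS_nonneg : ∀ m, 1 ≤ m → 0 ≤ S m)
    (hS'_nonneg : ∀ m, 1 ≤ m → 0 ≤ S' m)
    (ht_le : ∀ m, 1 ≤ m → t m ≤ t' m)
    (hS_le : ∀ m, 1 ≤ m → S m ≤ S' m) :
    ∀ m, 1 ≤ m →
      fcfsJ c t S m ≤ fcfsJ c t' S' m ∧ fcfsD c t S m ≤ fcfsD c t' S' m := by
  have hJ : ∀ m, 1 ≤ m → fcfsJ c t S m ≤ fcfsJ c t' S' m := by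
    intro m
    induction m using Nat.strong_induction_on with
    | _ m ih =>
      intro hm
      rw [fcfsJ, fcfsJ]
      by_cases h : m ≤ c
      · simpa [h] using ht_le m hm
      · simp only [h, if_false]
        refine max_le_max (ht_le m hm) (minStat_mono_aux _ _ _ (fun i => ?_))
        have hi := i.isLt
        exact add_le_add (ih (i + 1) (by omega) (by omega)) (hS_le (i + 1) (by omega))
  intro m hm
  refine ⟨hJ m hm, minStat_mono_aux _ _ _ (fun i => ?_)⟩
  exact add_le_add (hJ (i + 1) (by omega)) (hS_le (i + 1) (by omega))
end

section
/- Monotonicity of the Kiefer–Wolfowitz workload vector (Theorem 3.2, second part): Let c ≥ 1. Let W_0 and W_0' be vectors in ℝ^c with nonnegative coordinates listed in nondecreasing order such that the i-th coordinate of W_0 is at most the i-th coordinate of W_0' for every i. Let (T_n)_{n≥0} be a sequence of nonnegative interarrival times, and let (S_n)_{n≥0} and (S_n')_{n≥0} be sequences of nonnegative service durations with S_n ≤ S_n' for all n. Define W_{n+1} = R(W_n + S_n e − T_n f)^+ and W_{n+1}' = R(W_n' + S_n' e − T_n f)^+ for all n ≥ 0. Then for every n ≥ 0 and every i, the i-th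 coordinate of W_n is at most the i-th coordinate of W_n'. -/
/-- Rearrangement of a vector of reals into nondecreasing order. -/
noncomputable def sortVec {c : ℕ} (V : Fin c → ℝ) : Fin c → ℝ :=
  V ∘ Tuple.sort V

lemma sortVec_monotone {c : ℕ} (V : Fin c → ℝ) : Monotone (sortVec V) :=
  Tuple.monotone_sort V

lemma card_sortVec_le {c : ℕ} (V : Fin c → ℝ) (a : ℝ) :
    Fintype.card {j // sortVec V j ≤ a} = Fintype.card {j // V j ≤ a} :=
  Fintype.card_congr (Equiv.subtypeEquiv (Tuple.sort V) (fun j => Iff.rfl))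

lemma sortVec_mono {c : ℕ} {V V' : Fin c → ℝ} (h : ∀ j, V j ≤ V' j) (i : Fin c) :
    sortVec V i ≤ sortVec V' i := by
  set a := sortVec V' i with ha
  have h1 : i < Fintype.card {j // sortVec V' j ≤ a} :=
    by rw [Fintype.card_subtype]; exact (Tuple.lt_card_le_iff_apply_le_of_monotone (f := sortVec V') (a := a) (j := i) (sortVec_monotone V')).2 le_rfl
  have h2 : Fintype.card {j // V' j ≤ a} ≤ Fintype.card {j // V j ≤ a} :=
    Fintype.card_subtype_mono _ _ (fun j hj => le_trans (h j) hj)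
  have h3 : i < Fintype.card {j // sortVec V j ≤ a} := by
    rw [card_sortVec_le]
    calc (i : ℕ) < Fintype.card {j // V' j ≤ a} := by rwa [card_sortVec_le] at h1
    _ ≤ _ := h2
  rw [Fintype.card_subtype] at h3
  exact (Tuple.lt_card_le_iff_apply_le_of_monotone (f := sortVec V) (a := a) (j := i) (sortVec_monotone V)).1 h3

/-- The Kiefer–Wolfowitz workload update `R(W + S e − T f)⁺`: add the service duration
`S` to the first (smallest) coordinate, subtract the interarrival time `T` from every
coordinate, reorder in nondecreasing order, and replace negative coordinates by `0`. -/
noncomputable def kwUpdate {c : ℕ} (W : Fin c → ℝ) (S T : ℝ) : Fin c → ℝ :=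
  fun i => max (sortVec (fun j => (if (j : ℕ) = 0 then W j + S else W j) - T) i) 0

/-- **Monotonicity of the Kiefer–Wolfowitz workload vector** (Theorem 3.2, second part):
if two Kiefer–Wolfowitz recursions are driven by the same interarrival times, with
coordinatewise-dominated nonnegative nondecreasing initial workload vectors and
pointwise-dominated service durations, then the workload vectors are
coordinatewise dominated for all times. -/
theorem kw_monotone
    (c : ℕ) (hc : 1 ≤ c)
    (W W' : ℕ → Fin c → ℝ)
    (hW0_sorted : Monotone (W 0)) (hW'0_sorted : Monotone (W' 0))
    (hW0_nonneg : ∀ i, 0 ≤ W 0 i) (hW'0_nonneg : ∀ i, 0 ≤ W' 0 i)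
    (hW0_le : ∀ i, W 0 i ≤ W' 0 i)
    (T S S' : ℕ → ℝ)
    (hT : ∀ n, 0 ≤ T n) (hS : ∀ n, 0 ≤ S n) (hS' : ∀ n, 0 ≤ S' n)
    (hSS' : ∀ n, S n ≤ S' n)
    (hrec : ∀ n, W (n + 1) = kwUpdate (W n) (S n) (T n))
    (hrec' : ∀ n, W' (n + 1) = kwUpdate (W' n) (S' n) (T n)) :
    ∀ n i, W n i ≤ W' n i := by
  intro n
  induction n with
  | zero => exact hW0_le
  | succ n ih =>
    intro i
    rw [hrec, hrec']
    refine max_le_max (sortVec_mono (fun j => ?_) i) le_rfl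
    by_cases hj : (j : ℕ) = 0 <;> simp [hj] <;>
      [exact add_le_add (ih j) (hSS' n); exact ih j]
end

section
/- Domination of FCFS by an arbitrary allocation rule (core inductive comparison in Theorem 3.3): Let c ≥ 1, let 0 ≤ t_1 ≤ t_2 ≤ … be nondecreasing arrival times and let (S_m) be nonnegative service durations. Let (J_m, D_m) be the FCFS service-initiation and ordered departure times for these inputs. Let (J̃_m) and (D̃_m) be sequences of reals satisfying: J̃_m ≥ t_m for every m; J̃_{m+c} ≥ max{t_{m+c}, D̃_m} for every m ≥ 1; and D̃_m equals the m-th smallest element of the multiset {J̃_1 + S_1, …, J̃_{m+c−1} + S_{m+c−1}} for every m ≥ 1. Then J̃_m ≥ J_m and D̃_m ≥ D_m for every m ≥ 1. -/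
lemma countP_lt_get_le (L : List ℝ) (hL : L.Pairwise (· ≤ ·)) (k : ℕ) (hk : k < L.length) :
    L.countP (fun y => decide (y < L.get ⟨k, hk⟩)) ≤ k := by
  set x := L.get ⟨k, hk⟩ with hx
  have hsplit : L = L.take k ++ L.drop k := (List.take_append_drop k L).symm
  have hdrop : (L.drop k).countP (fun y => decide (y < x)) = 0 := by
    rw [List.countP_eq_zero]
    intro a ha
    obtain ⟨j, hj, rfl⟩ := List.mem_iff_getElem.mp ha
    rw [List.getElem_drop]
    simp only [decide_eq_true_eq, not_lt]
    have hlen : k + j < L.length := by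
      have := hj; simp only [List.length_drop] at this; omega
    have : L.get ⟨k, hk⟩ ≤ L.get ⟨k + j, hlen⟩ := by
      rcases Nat.eq_or_lt_of_le (Nat.le_add_right k j) with h | h
      · simp [← h]
      · exact hL.rel_get_of_lt h
    simpa [hx] using this
  calc L.countP (fun y => decide (y < x))
      = (L.take k).countP (fun y => decide (y < x)) +
        (L.drop k).countP (fun y => decide (y < x)) := by
        conv_lhs => rw [hsplit]
        exact List.countP_append
    _ ≤ (L.take k).length + 0 := by rw [hdrop]; exact Nat.add_le_add List.countP_le_length le_rfl
    _ ≤ k := by simp [List.length_take]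

lemma countP_lt_antitone : ∀ (a b : List ℝ), a.length = b.length →
    (∀ i (ha : i < a.length) (hb : i < b.length), a.get ⟨i, ha⟩ ≤ b.get ⟨i, hb⟩) →
    ∀ x : ℝ, b.countP (fun y => decide (y < x)) ≤ a.countP (fun y => decide (y < x)) := by
  intro a
  induction a with
  | nil => intro b hb _ x; simp [List.length_eq_zero_iff.mp hb.symm]
  | cons h t ih =>
    intro b hb hle x
    cases b with
    | nil => simp at hb
    | cons h' t' =>
      simp only [List.countP_cons]
      have h0 := hle 0 (by simp) (by simp)
      simp at h0
      have ht := ih t' (by simpa using hb) (fun i hi hi' => by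
        have := hle (i + 1) (by simpa using Nat.succ_lt_succ hi)
          (by simpa using Nat.succ_lt_succ hi')
        simpa using this) x
      have : (if decide (h' < x) = true then 1 else 0) ≤ (if decide (h < x) = true then 1 else 0) := by
        by_cases hh : h' < x
        · simp [hh, lt_of_le_of_lt h0 hh]
        · simp [hh]
      omega

lemma minStat_mono (m n : ℕ) (f g : Fin n → ℝ) (h : ∀ i, f i ≤ g i) :
    minStat m (List.ofFn f) ≤ minStat m (List.ofFn g) := by
  unfold minStat
  set L := ((List.ofFn f : Multiset ℝ).sort (· ≤ ·)) with hLdef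
  set M := ((List.ofFn g : Multiset ℝ).sort (· ≤ ·)) with hMdef
  have hLp : L.Perm (List.ofFn f) := by rw [← Multiset.coe_eq_coe]; exact Multiset.sort_eq _ _
  have hMp : M.Perm (List.ofFn g) := by rw [← Multiset.coe_eq_coe]; exact Multiset.sort_eq _ _
  have hLs : L.Pairwise (· ≤ ·) := Multiset.pairwise_sort _ _
  have hMs : M.Pairwise (· ≤ ·) := Multiset.pairwise_sort _ _
  have hLlen : L.length = n := by rw [hLp.length_eq, List.length_ofFn]
  have hMlen : M.length = n := by rw [hMp.length_eq, List.length_ofFn]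
  by_cases hm : m - 1 < n
  · rw [List.getD_eq_getElem L 0 (by omega), List.getD_eq_getElem M 0 (by omega)]
    set k := m - 1
    by_contra hcon
    push_neg at hcon
    set x := L[k]'(by omega) with hx
    have hcount1 : L.countP (fun y => decide (y < x)) ≤ k := by
      have := countP_lt_get_le L hLs k (by omega)
      simpa [hx, List.get_eq_getElem] using this
    have hcount2 : k + 1 ≤ M.countP (fun y => decide (y < x)) := by
      have htake : (M.take (k+1)).countP (fun y => decide (y < x)) = (M.take (k+1)).length := by
        rw [List.countP_eq_length]
        intro a ha
        obtain ⟨j, hj, rfl⟩ := List.mem_iff_getElem.mp ha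
        have hjk : j ≤ k := by
          have := hj; simp only [List.length_take] at this; omega
        have hjlen : j < M.length := by omega
        rw [List.getElem_take]
        have hle : M.get ⟨j, hjlen⟩ ≤ M.get ⟨k, by omega⟩ := by
          rcases Nat.eq_or_lt_of_le hjk with h | h
          · simp [h]
          · exact hMs.rel_get_of_lt h
        simp only [List.get_eq_getElem] at hle
        simp only [decide_eq_true_eq]
        exact lt_of_le_of_lt hle hcon
      have hlentake : (M.take (k+1)).length = k + 1 := by
        rw [List.length_take]; omega
      calc k + 1 = (M.take (k+1)).countP (fun y => decide (y < x)) := by rw [htake, hlentake]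
        _ ≤ M.countP (fun y => decide (y < x)) := by
            conv_rhs => rw [(List.take_append_drop (k+1) M).symm]
            rw [List.countP_append]; omega
    have hcc : M.countP (fun y => decide (y < x)) ≤ L.countP (fun y => decide (y < x)) := by
      rw [hMp.countP_eq, hLp.countP_eq]
      exact countP_lt_antitone (List.ofFn f) (List.ofFn g) (by simp)
        (fun i ha hb => by simpa using h _) x
    omega
  · rw [List.getD_eq_default L 0 (by omega), List.getD_eq_default M 0 (by omega)]

/-- **Domination of FCFS by an arbitrary allocation rule** (core inductive comparison
in Theorem 3.3): if a c-server system with the same arrivals and the same service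
durations (indexed by order of initiation of service) initiates its services no earlier
than arrivals and no earlier than freed-up servers allow, then each of its
service-initiation and ordered departure times dominate the corresponding FCFS ones. -/
theorem fcfs_minimal
    (c : ℕ) (hc : 1 ≤ c)
    (t S : ℕ → ℝ)
    (ht_nonneg : 0 ≤ t 1)
    (ht_mono : ∀ m, 1 ≤ m → t m ≤ t (m + 1))
    (hS_nonneg : ∀ m, 1 ≤ m → 0 ≤ S m)
    (J' D' : ℕ → ℝ)
    (hJ'_arr : ∀ m, 1 ≤ m → t m ≤ J' m)
    (hJ'_dep : ∀ m, 1 ≤ m → max (t (m + c)) (D' m) ≤ J' (m + c))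
    (hD' : ∀ m, 1 ≤ m →
      D' m = minStat m (List.ofFn (fun i : Fin (m + c - 1) => J' (i + 1) + S (i + 1)))) :
    ∀ m, 1 ≤ m → fcfsJ c t S m ≤ J' m ∧ fcfsD c t S m ≤ D' m := by
  have hJ : ∀ m, 1 ≤ m → fcfsJ c t S m ≤ J' m := by
    intro m
    induction m using Nat.strong_induction_on with
    | _ m ih =>
      intro hm
      rw [fcfsJ]
      by_cases hmc : m ≤ c
      · rw [if_pos hmc]; exact hJ'_arr m hm
      · rw [if_neg hmc]
        obtain ⟨k, rfl⟩ : ∃ k, m = k + c := ⟨m - c, by omega⟩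
        have hk : 1 ≤ k := by omega
        refine le_trans (max_le_max le_rfl ?_) (hJ'_dep k hk)
        rw [hD' k hk]
        simp only [Nat.add_sub_cancel]
        exact minStat_mono k _ _ _ (fun i =>
          add_le_add_left (ih (i + 1) (by have := i.isLt; omega) (by omega)) _)
  intro m hm
  refine ⟨hJ m hm, ?_⟩
  rw [fcfsD, hD' m hm]
  exact minStat_mono m _ _ _ (fun i =>
    add_le_add_left (hJ (i + 1) (by omega)) _)
end

section
/- At most m+c completions bound the m-th departure (equation (3.4) of the paper, D_m ≤ J_{m+c}): Let c ≥ 1 and m ≥ 1, let J : {1,…,m+c} → ℝ be nondecreasing and let S_i ≥ 0 for 1 ≤ i ≤ m+c. Suppose the c-server property holds: for every t ∈ ℝ, the set {i ∈ {1,…,m+c} : J_i ≤ t < J_i + S_i} has at most c elements. Then the m-th smallest element of the multiset {J_1 + S_1, …, J_{m+c} + S_{m+c}} is at most J_{m+c}. -/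
lemma sorted_getD_le' {l : List ℝ} (hl : l.Pairwise (· ≤ ·)) {m : ℕ} (hm : 1 ≤ m) {τ : ℝ}
    (hcount : m ≤ l.countP (fun x => decide (x ≤ τ))) : l.getD (m-1) 0 ≤ τ := by
  have hlen : m ≤ l.length := le_trans hcount List.countP_le_length
  have hlt : m - 1 < l.length := by omega
  rw [List.getD_eq_getElem l 0 hlt]
  by_contra h
  push_neg at h
  have hsplit : l.countP (fun x => decide (x ≤ τ)) =
      (l.take (m-1)).countP (fun x => decide (x ≤ τ)) +
      (l.drop (m-1)).countP (fun x => decide (x ≤ τ)) := by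
    conv_lhs => rw [← List.take_append_drop (m-1) l]
    rw [List.countP_append]
  have hdrop : (l.drop (m-1)).countP (fun x => decide (x ≤ τ)) = 0 := by
    rw [List.countP_eq_zero]
    intro a ha
    simp only [decide_eq_true_eq]
    push_neg
    obtain ⟨j, hj, rfl⟩ := List.getElem_of_mem ha
    have hj' : m - 1 + j < l.length := by
      rw [List.length_drop] at hj; omega
    rw [List.getElem_drop]
    have : l[m-1] ≤ l[m-1+j] := by
      apply hl.rel_get_of_le (a := ⟨m-1, hlt⟩) (b := ⟨m-1+j, hj'⟩)
      simp [Fin.le_def]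
    linarith
  have := List.countP_le_length (l := l.take (m-1)) (p := fun x => decide (x ≤ τ))
  simp only [List.length_take] at this
  omega

/-- **At most m+c completions bound the m-th departure** (equation (3.4): `D_m ≤ J_{m+c}`):
if services initiate at nondecreasing times `J 1 ≤ … ≤ J (m+c)` with nonnegative
durations, and at any time at most `c` services are in progress, then the m-th smallest
completion time among the first `m + c` services is at most `J (m + c)`. -/
theorem mth_departure_le_initiation
    (c m : ℕ) (hc : 1 ≤ c) (hm : 1 ≤ m)
    (J S : ℕ → ℝ)
    (hJ_mono : ∀ i j, 1 ≤ i → i ≤ j → j ≤ m + c → J i ≤ J j)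
    (hS_nonneg : ∀ i, 1 ≤ i → i ≤ m + c → 0 ≤ S i)
    (hservers : ∀ τ : ℝ,
      ((Finset.Icc 1 (m + c)).filter (fun i => J i ≤ τ ∧ τ < J i + S i)).card ≤ c) :
    minStat m (List.ofFn (fun i : Fin (m + c) => J (i + 1) + S (i + 1))) ≤ J (m + c) := by
  set τ := J (m + c) with hτ
  set l : List ℝ := List.ofFn (fun i : Fin (m + c) => J (i + 1) + S (i + 1)) with hl
  have hJle : ∀ i ∈ Finset.Icc 1 (m + c), J i ≤ τ := by
    intro i hi
    rw [Finset.mem_Icc] at hi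
    exact hJ_mono i (m + c) hi.1 hi.2 le_rfl
  have hcard : m ≤ ((Finset.Icc 1 (m + c)).filter (fun i => J i + S i ≤ τ)).card := by
    have hcompl : (Finset.Icc 1 (m + c)).filter (fun i => ¬ (J i + S i ≤ τ)) =
        (Finset.Icc 1 (m + c)).filter (fun i => J i ≤ τ ∧ τ < J i + S i) := by
      apply Finset.filter_congr
      intro i hi
      simp only [not_le, eq_iff_iff]
      exact ⟨fun h => ⟨hJle i hi, h⟩, fun h => h.2⟩
    have h1 := Finset.card_filter_add_card_filter_not
      (s := Finset.Icc 1 (m + c)) (p := fun i => J i + S i ≤ τ)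
    rw [hcompl] at h1
    have h2 := hservers τ
    have h3 : (Finset.Icc 1 (m + c)).card = m + c := by
      rw [Nat.card_Icc]; omega
    omega
  have hcountl : m ≤ l.countP (fun x => decide (x ≤ τ)) := by
    rw [hl, List.ofFn_eq_map, List.countP_map]
    have heq : List.countP ((fun x => decide (x ≤ τ)) ∘ (fun i : Fin (m+c) => J (i + 1) + S (i + 1)))
        (List.finRange (m + c)) =
        (Finset.univ.filter (fun i : Fin (m + c) => J (i + 1) + S (i + 1) ≤ τ)).card := by
      rw [Fin.univ_def]
      simp only [Finset.filter, List.countP_eq_length_filter, Multiset.quot_mk_to_coe'']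
      rfl
    rw [heq]
    refine le_trans hcard (le_of_eq ?_)
    apply Finset.card_bij (fun (i : ℕ) (hi : i ∈ (Finset.Icc 1 (m + c)).filter (fun i => J i + S i ≤ τ)) =>
      (⟨i - 1, by simp only [Finset.mem_filter, Finset.mem_Icc] at hi; omega⟩ : Fin (m + c)))
    · intro a ha
      simp only [Finset.mem_filter, Finset.mem_Icc, Finset.mem_univ, true_and] at ha ⊢
      have h5 : a - 1 + 1 = a := by omega
      rw [h5]
      exact ha.2
    · intro a ha b hb hab
      simp only [Finset.mem_filter, Finset.mem_Icc] at ha hb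
      simp only [Fin.mk.injEq] at hab
      omega
    · intro b hb
      refine ⟨(b : ℕ) + 1, ?_, ?_⟩
      · simp only [Finset.mem_filter, Finset.mem_Icc, Finset.mem_univ, true_and] at hb ⊢
        exact ⟨⟨by omega, by omega⟩, hb⟩
      · simp
  unfold minStat
  have hsorted := Multiset.pairwise_sort (s := Multiset.ofList l) (r := (· ≤ ·))
  have hcount2 : m ≤ ((Multiset.ofList l).sort (· ≤ ·)).countP (fun x => decide (x ≤ τ)) := by
    have heq2 : ((Multiset.ofList l).sort (· ≤ ·) : Multiset ℝ) = Multiset.ofList l :=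
      Multiset.sort_eq _ _
    have h4 : ((Multiset.ofList l).sort (· ≤ ·)).countP (fun x => decide (x ≤ τ))
        = l.countP (fun x => decide (x ≤ τ)) := by
      rw [← Multiset.coe_countP, ← Multiset.coe_countP, heq2]
    rw [h4]
    exact hcountl
  exact sorted_getD_le' hsorted hm hcount2
end
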